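/- arXiv:1311.3832 — 7 statements merged into one kernel-verified Lean document; each statement's English description precedes it below -/
import Mathlib

section
/- Let v ∈ [0,1], ε > 0, M_v ≥ 0, and let M be a real number with M > (1/ε)^{(1−v)/(1+v)}·M_v^{2/(1+v)}. Then for every real t ≥ 0, (M_v/(1+v))·t^{1+v} ≤ (1/2)·M·t² + ε/2. -/
/-- For `v ∈ [0,1]`, `ε > 0`, `M_v ≥ 0` and `M > (1/ε)^{(1−v)/(1+v)}·M_v^{2/(1+v)}`,
every `t ≥ 0` satisfies `(M_v/(1+v))·t^{1+v} ≤ (1/2)·M·t² + ε/2`. -/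
theorem statement1 (v ε Mv M : ℝ) (hv0 : 0 ≤ v) (hv1 : v ≤ 1) (hε : 0 < ε) (hMv : 0 ≤ Mv)
    (hM : M > (1 / ε) ^ ((1 - v) / (1 + v)) * Mv ^ (2 / (1 + v))) :
    ∀ t : ℝ, 0 ≤ t → Mv / (1 + v) * t ^ (1 + v) ≤ 1 / 2 * M * t ^ 2 + ε / 2 := by
  intro t ht
  have h1v : (0:ℝ) < 1 + v := by linarith
  set θ : ℝ := (1 + v) / 2 with hθ
  have hθ0 : 0 ≤ θ := by positivity
  have hθ1 : 0 ≤ 1 - θ := by rw [hθ]; linarith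
  have hγ0 : 0 ≤ (1 / ε) ^ ((1 - v) / (1 + v)) * Mv ^ (2 / (1 + v)) := by positivity
  have hM0 : 0 < M := lt_of_le_of_lt hγ0 hM
  -- key: Mv ≤ M^θ * ε^(1-θ)
  have e1 : ((1 / ε) ^ ((1 - v) / (1 + v)) * Mv ^ (2 / (1 + v))) ^ θ
      = (1 / ε) ^ ((1 - v) / 2) * Mv := by
    rw [Real.mul_rpow (by positivity) (by positivity),
      ← Real.rpow_mul (by positivity), ← Real.rpow_mul hMv]
    congr 1
    · congr 1
      rw [hθ]; field_simp
    · rw [show 2 / (1 + v) * θ = 1 by rw [hθ]; field_simp]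
      exact Real.rpow_one Mv
  have e2 : (1 / ε) ^ ((1 - v) / 2) * ε ^ ((1 - v) / 2) = 1 := by
    rw [← Real.mul_rpow (by positivity) hε.le]
    rw [one_div, inv_mul_cancel₀ hε.ne', Real.one_rpow]
  have h1 : (1 / ε) ^ ((1 - v) / 2) * Mv ≤ M ^ θ := by
    rw [← e1]; exact Real.rpow_le_rpow hγ0 hM.le hθ0
  have key : Mv ≤ M ^ θ * ε ^ (1 - θ) := by
    have h1θ : 1 - θ = (1 - v) / 2 := by rw [hθ]; ring
    have := mul_le_mul_of_nonneg_right h1 (Real.rpow_nonneg hε.le ((1 - v) / 2))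
    calc Mv = (1 / ε) ^ ((1 - v) / 2) * Mv * ε ^ ((1 - v) / 2) := by
              rw [mul_comm ((1/ε) ^ ((1-v)/2)) Mv, mul_assoc, e2, mul_one]
      _ ≤ M ^ θ * ε ^ ((1 - v) / 2) := this
      _ = M ^ θ * ε ^ (1 - θ) := by rw [h1θ]
  -- AM-GM
  have amgm : (M * t ^ 2) ^ θ * ε ^ (1 - θ) ≤ θ * (M * t ^ 2) + (1 - θ) * ε :=
    Real.geom_mean_le_arith_mean2_weighted hθ0 hθ1 (by positivity) hε.le (by ring)
  have e3 : (M * t ^ 2) ^ θ = M ^ θ * t ^ (1 + v) := by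
    rw [Real.mul_rpow hM0.le (by positivity)]
    congr 1
    rw [← Real.rpow_natCast t 2, ← Real.rpow_mul ht]
    congr 1; push_cast; rw [hθ]; ring
  have htp : 0 ≤ t ^ (1 + v) := Real.rpow_nonneg ht _
  have hfinal : Mv * t ^ (1 + v) ≤ θ * (M * t ^ 2) + θ * ε := by
    calc Mv * t ^ (1 + v) ≤ (M ^ θ * ε ^ (1 - θ)) * t ^ (1 + v) :=
          mul_le_mul_of_nonneg_right key htp
      _ = (M * t ^ 2) ^ θ * ε ^ (1 - θ) := by rw [e3]; ring
      _ ≤ θ * (M * t ^ 2) + (1 - θ) * ε := amgm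
      _ ≤ θ * (M * t ^ 2) + θ * ε := by
          have : 1 - θ ≤ θ := by rw [hθ]; linarith
          nlinarith [hε.le]
  have : Mv / (1 + v) * t ^ (1 + v) = (Mv * t ^ (1 + v)) / (1 + v) := by ring
  rw [this, div_le_iff₀ h1v]
  calc Mv * t ^ (1 + v) ≤ θ * (M * t ^ 2) + θ * ε := hfinal
    _ = (1 / 2 * M * t ^ 2 + ε / 2) * (1 + v) := by rw [hθ]; ring
end

section
/- Let g : ℝ^p → ℝ be differentiable with Hölder continuous gradient of exponent v ∈ [0,1] and constant M_v ≥ 0. Let ε > 0 and let M > (1/ε)^{(1−v)/(1+v)}·M_v^{2/(1+v)}. Then for all x, y ∈ ℝ^p, g(y) ≤ g(x) + ⟨∇g(x), y − x⟩ + (M/2)‖y − x‖² + ε/2. -/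
/-!
Along the segment `x + t (y - x)`, the Hölder condition bounds the derivative of the gap between
`g` and its linearization by `M_v ‖y - x‖^(1+v) t^v`, so subtracting the antiderivative of that
bound leaves an antitone function of `t`; comparing `t = 0` with `t = 1` gives
`g y ≤ g x + ⟪∇g x, y - x⟫ + M_v/(1+v) ‖y - x‖^(1+v)`. The choice of `M` is exactly what makes
`M_v ≤ M^((1+v)/2) ε^((1-v)/2)`, and weighted AM-GM with weights `(1 ± v)/2` then bounds
`M_v/(1+v) r^(1+v)` by `M/2 r² + ε/2`.
-/

open scoped InnerProductSpace

section HolderGradient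

variable {F : Type*} [NormedAddCommGroup F] [InnerProductSpace ℝ F] [CompleteSpace F]

theorem le_add_inner_gradient_add_rpow_of_holder {v Mv : ℝ} (hv : -1 < v) {g : F → ℝ}
    (hg : Differentiable ℝ g)
    (hHolder : ∀ x y, ‖gradient g x - gradient g y‖ ≤ Mv * ‖x - y‖ ^ v) (x y : F) :
    g y ≤ g x + ⟪gradient g x, y - x⟫_ℝ + Mv / (1 + v) * ‖y - x‖ ^ (1 + v) := by
  set c := y - x
  have hv1 : 0 < 1 + v := by linarith
  set φ : ℝ → ℝ := fun t ↦
    g (x + t • c) - t * ⟪gradient g x, c⟫_ℝ - Mv / (1 + v) * ‖c‖ ^ (1 + v) * t ^ (1 + v)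
  have hline : ∀ t : ℝ, HasDerivAt (fun t : ℝ ↦ g (x + t • c)) ⟪gradient g (x + t • c), c⟫_ℝ t :=
    fun t ↦ by
      have := (hg (x + t • c)).hasGradientAt.hasFDerivAt.comp_hasDerivAt t
        (((hasDerivAt_id t).smul_const c).const_add x)
      simpa [Function.comp_def] using this
  set φ' : ℝ → ℝ := fun t ↦
    ⟪gradient g (x + t • c) - gradient g x, c⟫_ℝ - Mv * ‖c‖ ^ (1 + v) * t ^ v
  have hderiv : ∀ t, 0 < t → HasDerivAt φ (φ' t) t := by
    intro t ht
    have hpow := Real.hasDerivAt_rpow_const (p := 1 + v) (Or.inl ht.ne')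
    refine (((hline t).sub ((hasDerivAt_id t).mul_const ⟪gradient g x, c⟫_ℝ)).sub
      (hpow.const_mul (Mv / (1 + v) * ‖c‖ ^ (1 + v)))).congr_deriv ?_
    rw [add_sub_cancel_left]
    simp only [φ', inner_sub_left]
    field_simp
  have hderiv_nonpos : ∀ t, 0 < t → φ' t ≤ 0 := by
    intro t ht
    have h := hHolder (x + t • c) x
    rw [add_sub_cancel_left, norm_smul, Real.norm_of_nonneg ht.le,
      Real.mul_rpow ht.le (norm_nonneg c)] at h
    rw [sub_nonpos]
    calc ⟪gradient g (x + t • c) - gradient g x, c⟫_ℝ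
        ≤ ‖gradient g (x + t • c) - gradient g x‖ * ‖c‖ := real_inner_le_norm _ _
      _ ≤ Mv * (t ^ v * ‖c‖ ^ v) * ‖c‖ := by gcongr
      _ = Mv * ‖c‖ ^ (1 + v) * t ^ v := by
        rw [Real.rpow_add' (norm_nonneg c) hv1.ne', Real.rpow_one]; ring
  have hcont : Continuous φ := by
    have := Real.continuous_rpow_const hv1.le
    have := hg.continuous
    fun_prop
  have hanti : AntitoneOn φ (Set.Ici 0) :=
    antitoneOn_of_hasDerivWithinAt_nonpos (f' := φ') (convex_Ici 0) hcont.continuousOn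
      (fun t ht ↦ (hderiv t (by simpa using ht)).hasDerivWithinAt)
      (fun t ht ↦ hderiv_nonpos t (by simpa using ht))
  have := hanti Set.self_mem_Ici (zero_le_one' ℝ) zero_le_one
  simp only [φ, c, one_smul, one_mul, Real.one_rpow, mul_one, zero_smul, add_zero, zero_mul,
    sub_zero, Real.zero_rpow hv1.ne', mul_zero, add_sub_cancel] at this
  linarith

end HolderGradient

section HolderThreshold

open Real

theorem le_rpow_mul_rpow_of_holder_threshold_le {v Mv ε M : ℝ} (hv : -1 < v) (hMv : 0 ≤ Mv)
    (hε : 0 < ε) (hM : (1 / ε) ^ ((1 - v) / (1 + v)) * Mv ^ (2 / (1 + v)) ≤ M) :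
    Mv ≤ M ^ ((1 + v) / 2) * ε ^ ((1 - v) / 2) := by
  have hv1 : 0 < 1 + v := by linarith
  have h := rpow_le_rpow (by positivity) hM (by positivity : 0 ≤ (1 + v) / 2)
  have e1 : (1 - v) / (1 + v) * ((1 + v) / 2) = (1 - v) / 2 := by field_simp
  have e2 : 2 / (1 + v) * ((1 + v) / 2) = 1 := by field_simp
  rw [mul_rpow (by positivity) (by positivity), ← rpow_mul (by positivity), ← rpow_mul hMv,
    e1, e2, rpow_one, one_div, inv_rpow hε.le] at h
  rwa [inv_mul_le_iff₀ (by positivity), mul_comm] at h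

theorem div_mul_rpow_le_of_le_rpow_mul_rpow {v Mv ε M r : ℝ} (hv0 : 0 ≤ v) (hv1 : v ≤ 1)
    (hM : 0 ≤ M) (hε : 0 ≤ ε) (hr : 0 ≤ r) (hMv : Mv ≤ M ^ ((1 + v) / 2) * ε ^ ((1 - v) / 2)) :
    Mv / (1 + v) * r ^ (1 + v) ≤ M / 2 * r ^ 2 + ε / 2 := by
  have hr2 : (r ^ 2) ^ ((1 + v) / 2) = r ^ (1 + v) := by
    rw [← rpow_two, ← rpow_mul hr]; ring_nf
  have hamgm := geom_mean_le_arith_mean2_weighted (w₁ := (1 + v) / 2) (w₂ := (1 - v) / 2)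
    (p₁ := M * r ^ 2) (p₂ := ε) (by linarith) (by linarith) (by positivity) hε (by ring)
  have hmain : Mv * r ^ (1 + v) ≤ (1 + v) / 2 * (M * r ^ 2) + (1 - v) / 2 * ε :=
    calc Mv * r ^ (1 + v) ≤ M ^ ((1 + v) / 2) * ε ^ ((1 - v) / 2) * r ^ (1 + v) := by gcongr
      _ = (M * r ^ 2) ^ ((1 + v) / 2) * ε ^ ((1 - v) / 2) := by
        rw [mul_rpow hM (by positivity), hr2]; ring
      _ ≤ _ := hamgm
  rw [div_mul_eq_mul_div, div_le_iff₀ (by linarith)]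
  nlinarith [mul_nonneg hv0 hε, mul_nonneg hv0 (by positivity : 0 ≤ M * r ^ 2)]

end HolderThreshold

/-- If `g` is differentiable with Hölder continuous gradient of exponent `v ∈ [0,1]`
and constant `M_v ≥ 0`, `ε > 0` and `M > (1/ε)^{(1−v)/(1+v)}·M_v^{2/(1+v)}`, then for
all `x, y`, `g(y) ≤ g(x) + ⟨∇g(x), y − x⟩ + (M/2)‖y − x‖² + ε/2`. -/
theorem statement2 {p : ℕ} (v Mv ε M : ℝ) (hv0 : 0 ≤ v) (hv1 : v ≤ 1) (hMv : 0 ≤ Mv)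
    (hε : 0 < ε) (hM : M > (1 / ε) ^ ((1 - v) / (1 + v)) * Mv ^ (2 / (1 + v)))
    (g : EuclideanSpace ℝ (Fin p) → ℝ) (hg : Differentiable ℝ g)
    (hHolder : ∀ x y : EuclideanSpace ℝ (Fin p),
      ‖gradient g x - gradient g y‖ ≤ Mv * ‖x - y‖ ^ v) :
    ∀ x y : EuclideanSpace ℝ (Fin p),
      g y ≤ g x + ⟪gradient g x, y - x⟫_ℝ + M / 2 * ‖y - x‖ ^ 2 + ε / 2 := by
  intro x y
  have hM0 : 0 ≤ M := le_trans (by positivity) hM.le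
  have hMv_le := le_rpow_mul_rpow_of_holder_threshold_le (by linarith) hMv hε hM.le
  have hdescent := le_add_inner_gradient_add_rpow_of_holder (by linarith) hg hHolder x y
  have hscalar := div_mul_rpow_le_of_le_rpow_mul_rpow hv0 hv1 hM0 hε.le (norm_nonneg (y - x))
    hMv_le
  linarith
end

section
/- Let d : ℝ^p → ℝ be a differentiable 1-strongly convex function with Bregman distance ξ(x,y) := d(y) − d(x) − ⟨∇d(x), y − x⟩. Let g : ℝ^p → ℝ be differentiable with Hölder continuous gradient of exponent v ∈ [0,1] and constant M_v ≥ 0, let h : ℝ^p → ℝ be convex, let ε > 0 and M > (1/ε)^{(1−v)/(1+v)}·M_v^{2/(1+v)}. If x̂ is a minimizer over y of the map y ↦ g(x) + ⟨∇g(x), y − x⟩ + M·ξ(y, x) + h(y), then g(x̂) + h(x̂) ≤ g(x) + ⟨∇g(x), x̂ − x⟩ + M·ξ(x̂, x) + h(x̂) + ε/2. -/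
/-!
Along the segment from `x` to `x̂`, the Hölder condition bounds the gap between `g` and its
linearization by `M_v/(1+v) · ‖x̂ - x‖^{1+v}`. The weighted AM-GM inequality with weights
`(1+v)/2` and `(1-v)/2`, applied to `M‖x̂ - x‖²` and `ε`, turns the condition on `M` into
`M_v/(1+v) · t^{1+v} ≤ M/2 · t² + ε/2`, and `1/2 · ‖x̂ - x‖² ≤ ξ(x̂, x)` by strong convexity of `d`.
-/

open scoped InnerProductSpace

section HolderGradient

variable {E : Type*} [NormedAddCommGroup E] [InnerProductSpace ℝ E] [CompleteSpace E]
  {g : E → ℝ}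

theorem hasDerivAt_comp_add_smul {x u : E} {s : ℝ} (hg : DifferentiableAt ℝ g (x + s • u)) :
    HasDerivAt (fun r : ℝ => g (x + r • u)) ⟪gradient g (x + s • u), u⟫_ℝ s := by
  have hline : HasDerivAt (fun r : ℝ => x + r • u) u s := by
    simpa using ((hasDerivAt_id s).smul_const u).const_add x
  exact (hasGradientAt_iff_hasFDerivAt.mp hg.hasGradientAt).comp_hasDerivAt s hline

theorem le_add_inner_gradient_add_of_holder {v Mv : ℝ} (hv : 0 ≤ v) (hg : Differentiable ℝ g)
    (hHolder : ∀ x y : E, ‖gradient g x - gradient g y‖ ≤ Mv * ‖x - y‖ ^ v) (x y : E) :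
    g y ≤ g x + ⟪gradient g x, y - x⟫_ℝ + Mv / (1 + v) * ‖y - x‖ ^ (1 + v) := by
  have hv' : (1 : ℝ) + v ≠ 0 := by linarith
  set u := y - x
  set C := Mv * ‖u‖ ^ (1 + v)
  have hf (s : ℝ) : HasDerivAt (fun r : ℝ => g (x + r • u) - g x - r * ⟪gradient g x, u⟫_ℝ)
      (⟪gradient g (x + s • u), u⟫_ℝ - ⟪gradient g x, u⟫_ℝ) s :=
    ((hasDerivAt_comp_add_smul (hg _)).sub_const (g x)).sub
      (hasDerivAt_mul_const ⟪gradient g x, u⟫_ℝ)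
  have hB (s : ℝ) : HasDerivAt (fun r : ℝ => C / (1 + v) * r ^ (1 + v)) (C * s ^ v) s := by
    have h := (Real.hasDerivAt_rpow_const (x := s) (p := 1 + v) (Or.inr (by linarith))).const_mul
      (C / (1 + v))
    rw [add_sub_cancel_left] at h
    rwa [← mul_assoc, div_mul_cancel₀ _ hv'] at h
  have hbound (s : ℝ) (hs : s ∈ Set.Ico (0 : ℝ) 1) :
      ⟪gradient g (x + s • u), u⟫_ℝ - ⟪gradient g x, u⟫_ℝ ≤ C * s ^ v := by
    calc ⟪gradient g (x + s • u), u⟫_ℝ - ⟪gradient g x, u⟫_ℝ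
        = ⟪gradient g (x + s • u) - gradient g x, u⟫_ℝ := (inner_sub_left _ _ _).symm
      _ ≤ ‖gradient g (x + s • u) - gradient g x‖ * ‖u‖ := real_inner_le_norm _ _
      _ ≤ Mv * ‖s • u‖ ^ v * ‖u‖ := by
          gcongr
          simpa using hHolder (x + s • u) x
      _ = C * s ^ v := by
          rw [norm_smul, Real.norm_of_nonneg hs.1, Real.mul_rpow hs.1 (norm_nonneg _)]
          simp only [C]
          rw [Real.rpow_add' (norm_nonneg _) hv', Real.rpow_one]
          ring
  have key := image_le_of_deriv_right_le_deriv_boundary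
    (fun s _ => (hf s).continuousAt.continuousWithinAt) (fun s _ => (hf s).hasDerivWithinAt)
    (by simp [Real.zero_rpow hv']) (fun s _ => (hB s).continuousAt.continuousWithinAt)
    (fun s _ => (hB s).hasDerivWithinAt) hbound (Set.right_mem_Icc.mpr zero_le_one)
  simp only [one_smul, one_mul, Real.one_rpow, mul_one, u, add_sub_cancel] at key
  have : C / (1 + v) = Mv / (1 + v) * ‖y - x‖ ^ (1 + v) := by ring
  linarith

end HolderGradient

theorem le_rpow_mul_rpow_of_inv_rpow_mul_rpow_le {v Mv ε M : ℝ} (hv : 0 ≤ v) (hMv : 0 ≤ Mv)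
    (hε : 0 < ε) (hM : (1 / ε) ^ ((1 - v) / (1 + v)) * Mv ^ (2 / (1 + v)) ≤ M) :
    Mv ≤ M ^ ((1 + v) / 2) * ε ^ ((1 - v) / 2) := by
  have hv' : (0 : ℝ) < 1 + v := by linarith
  have hpow := Real.rpow_le_rpow (by positivity) hM (by positivity : (0 : ℝ) ≤ (1 + v) / 2)
  rw [Real.mul_rpow (by positivity) (by positivity), ← Real.rpow_mul (by positivity),
    ← Real.rpow_mul hMv, show (1 - v) / (1 + v) * ((1 + v) / 2) = (1 - v) / 2 by field_simp,
    show 2 / (1 + v) * ((1 + v) / 2) = 1 by field_simp, Real.rpow_one,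
    Real.div_rpow zero_le_one hε.le, Real.one_rpow] at hpow
  have hεpow : 0 < ε ^ ((1 - v) / 2) := by positivity
  calc Mv = 1 / ε ^ ((1 - v) / 2) * Mv * ε ^ ((1 - v) / 2) := by field_simp
    _ ≤ M ^ ((1 + v) / 2) * ε ^ ((1 - v) / 2) := by gcongr

theorem div_mul_rpow_le_half_mul_sq_add_half {v Mv ε M t : ℝ} (hv0 : 0 ≤ v) (hv1 : v ≤ 1)
    (hε : 0 ≤ ε) (hM : 0 ≤ M) (ht : 0 ≤ t) (hMv : Mv ≤ M ^ ((1 + v) / 2) * ε ^ ((1 - v) / 2)) :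
    Mv / (1 + v) * t ^ (1 + v) ≤ M / 2 * t ^ 2 + ε / 2 := by
  have hv' : (0 : ℝ) < 1 + v := by linarith
  have hamgm := Real.geom_mean_le_arith_mean2_weighted (w₁ := (1 + v) / 2) (w₂ := (1 - v) / 2)
    (by linarith) (by linarith) (by positivity : 0 ≤ M * t ^ 2) hε (by ring)
  have hsq : (M * t ^ 2) ^ ((1 + v) / 2) = M ^ ((1 + v) / 2) * t ^ (1 + v) := by
    rw [Real.mul_rpow hM (by positivity), ← Real.rpow_natCast, ← Real.rpow_mul ht]
    norm_num [mul_div_cancel₀]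
  rw [hsq] at hamgm
  have hMvt : Mv * t ^ (1 + v) ≤ (1 + v) / 2 * (M * t ^ 2) + (1 - v) / 2 * ε := by
    calc Mv * t ^ (1 + v) ≤ M ^ ((1 + v) / 2) * ε ^ ((1 - v) / 2) * t ^ (1 + v) := by gcongr
      _ ≤ _ := by linarith
  rw [div_mul_eq_mul_div, div_le_iff₀ hv']
  linarith [mul_nonneg hv0 hε]

theorem statement3_general {p : ℕ} (v Mv ε M : ℝ) (hv0 : 0 ≤ v) (hv1 : v ≤ 1) (hMv : 0 ≤ Mv)
    (hε : 0 < ε) (hM : M > (1 / ε) ^ ((1 - v) / (1 + v)) * Mv ^ (2 / (1 + v)))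
    (d : EuclideanSpace ℝ (Fin p) → ℝ)
    (hdsc : ∀ x y : EuclideanSpace ℝ (Fin p),
      d x + ⟪gradient d x, y - x⟫_ℝ + 1 / 2 * ‖y - x‖ ^ 2 ≤ d y)
    (xi : EuclideanSpace ℝ (Fin p) → EuclideanSpace ℝ (Fin p) → ℝ)
    (hxi : ∀ x y : EuclideanSpace ℝ (Fin p), xi x y = d y - d x - ⟪gradient d x, y - x⟫_ℝ)
    (g : EuclideanSpace ℝ (Fin p) → ℝ) (hg : Differentiable ℝ g)
    (hHolder : ∀ x y : EuclideanSpace ℝ (Fin p),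
      ‖gradient g x - gradient g y‖ ≤ Mv * ‖x - y‖ ^ v)
    (h : EuclideanSpace ℝ (Fin p) → ℝ)
    (x xhat : EuclideanSpace ℝ (Fin p)) :
    g xhat + h xhat ≤ g x + ⟪gradient g x, xhat - x⟫_ℝ + M * xi xhat x + h xhat + ε / 2 := by
  have hM0 : 0 ≤ M := le_trans (by positivity) hM.le
  have hxi_ge : 1 / 2 * ‖xhat - x‖ ^ 2 ≤ xi xhat x := by
    rw [hxi, norm_sub_rev]
    linarith [hdsc xhat x]
  have hgap := div_mul_rpow_le_half_mul_sq_add_half hv0 hv1 hε.le hM0 (norm_nonneg (xhat - x))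
    (le_rpow_mul_rpow_of_inv_rpow_mul_rpow_le hv0 hMv hε hM.le)
  have hdescent := le_add_inner_gradient_add_of_holder hv0 hg hHolder x xhat
  linarith [mul_le_mul_of_nonneg_left hxi_ge hM0]

/-- Let `d` be a differentiable 1-strongly convex prox-function with Bregman distance
`ξ(x,y) = d(y) − d(x) − ⟨∇d(x), y − x⟩`, `g` differentiable with Hölder continuous
gradient of exponent `v ∈ [0,1]` and constant `M_v ≥ 0`, `h` convex, `ε > 0` and
`M > (1/ε)^{(1−v)/(1+v)}·M_v^{2/(1+v)}`. If `x̂` minimizes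
`y ↦ g(x) + ⟨∇g(x), y − x⟩ + M·ξ(y,x) + h(y)`, then
`g(x̂) + h(x̂) ≤ g(x) + ⟨∇g(x), x̂ − x⟩ + M·ξ(x̂,x) + h(x̂) + ε/2`. -/
theorem statement3 {p : ℕ} (v Mv ε M : ℝ) (hv0 : 0 ≤ v) (hv1 : v ≤ 1) (hMv : 0 ≤ Mv)
    (hε : 0 < ε) (hM : M > (1 / ε) ^ ((1 - v) / (1 + v)) * Mv ^ (2 / (1 + v)))
    (d : EuclideanSpace ℝ (Fin p) → ℝ) (hd : Differentiable ℝ d)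
    (hdsc : ∀ x y : EuclideanSpace ℝ (Fin p),
      d x + ⟪gradient d x, y - x⟫_ℝ + 1 / 2 * ‖y - x‖ ^ 2 ≤ d y)
    (xi : EuclideanSpace ℝ (Fin p) → EuclideanSpace ℝ (Fin p) → ℝ)
    (hxi : ∀ x y : EuclideanSpace ℝ (Fin p), xi x y = d y - d x - ⟪gradient d x, y - x⟫_ℝ)
    (g : EuclideanSpace ℝ (Fin p) → ℝ) (hg : Differentiable ℝ g)
    (hHolder : ∀ x y : EuclideanSpace ℝ (Fin p),
      ‖gradient g x - gradient g y‖ ≤ Mv * ‖x - y‖ ^ v)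
    (h : EuclideanSpace ℝ (Fin p) → ℝ) (hh : ConvexOn ℝ Set.univ h)
    (x xhat : EuclideanSpace ℝ (Fin p))
    (hxhat : ∀ y : EuclideanSpace ℝ (Fin p),
      g x + ⟪gradient g x, xhat - x⟫_ℝ + M * xi xhat x + h xhat ≤
        g x + ⟪gradient g x, y - x⟫_ℝ + M * xi y x + h y) :
    g xhat + h xhat ≤ g x + ⟪gradient g x, xhat - x⟫_ℝ + M * xi xhat x + h xhat + ε / 2 :=
  statement3_general v Mv ε M hv0 hv1 hMv hε hM d hdsc xi hxi g hg hHolder h x xhat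
end

section
/- Let d : ℝ^p → ℝ be a differentiable 1-strongly convex function with Bregman distance ξ(x,y) := d(y) − d(x) − ⟨∇d(x), y − x⟩. Let g : ℝ^p → ℝ be convex and differentiable, h : ℝ^p → ℝ convex, ε > 0, L > 0, and let x, x⁺ ∈ ℝ^p satisfy: (i) for all y ∈ ℝ^p, ⟨∇g(x) + 2L(∇d(x⁺) − ∇d(x)), y − x⁺⟩ + h(y) − h(x⁺) ≥ 0; (ii) g(x⁺) ≤ g(x) + ⟨∇g(x), x⁺ − x⟩ + L‖x⁺ − x‖² + ε/2. Then for every y ∈ ℝ^p, (1/(2L))·(g(x⁺) + h(x⁺)) + ξ(x⁺, y) ≤ (1/(2L))·[g(x) + ⟨∇g(x), y − x⟩ + h(y) + ε/2] + ξ(x, y). -/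
open scoped InnerProductSpace

/-- One-step progress inequality of O-UPGM. Let `d` be a differentiable 1-strongly convex
prox-function with Bregman distance `ξ(x,y) = d(y) − d(x) − ⟨∇d(x), y − x⟩`, `g` convex
differentiable, `h` convex, `ε > 0`, `L > 0`, and suppose `x, x⁺` satisfy the optimality
condition (i) and the line-search acceptance condition (ii). Then for every `y`,
`(1/(2L))(g(x⁺) + h(x⁺)) + ξ(x⁺, y) ≤ (1/(2L))[g(x) + ⟨∇g(x), y − x⟩ + h(y) + ε/2] + ξ(x, y)`. -/
theorem statement6 {p : ℕ} (ε L : ℝ) (hε : 0 < ε) (hL : 0 < L)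
    (d : EuclideanSpace ℝ (Fin p) → ℝ) (hd : Differentiable ℝ d)
    (hdsc : ∀ x y : EuclideanSpace ℝ (Fin p),
      d x + ⟪gradient d x, y - x⟫_ℝ + 1 / 2 * ‖y - x‖ ^ 2 ≤ d y)
    (g : EuclideanSpace ℝ (Fin p) → ℝ) (hgconv : ConvexOn ℝ Set.univ g)
    (hg : Differentiable ℝ g)
    (h : EuclideanSpace ℝ (Fin p) → ℝ) (hh : ConvexOn ℝ Set.univ h)
    (x xplus : EuclideanSpace ℝ (Fin p))
    (hopt : ∀ y : EuclideanSpace ℝ (Fin p),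
      ⟪gradient g x + (2 * L) • (gradient d xplus - gradient d x), y - xplus⟫_ℝ
        + h y - h xplus ≥ 0)
    (hls : g xplus ≤ g x + ⟪gradient g x, xplus - x⟫_ℝ + L * ‖xplus - x‖ ^ 2 + ε / 2) :
    ∀ y : EuclideanSpace ℝ (Fin p),
      1 / (2 * L) * (g xplus + h xplus)
          + (d y - d xplus - ⟪gradient d xplus, y - xplus⟫_ℝ)
        ≤ 1 / (2 * L) * (g x + ⟪gradient g x, y - x⟫_ℝ + h y + ε / 2)
          + (d y - d x - ⟪gradient d x, y - x⟫_ℝ) := by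
  intro y
  have h1 := hopt y
  have h2 := hdsc x xplus
  simp only [inner_add_left, inner_sub_left, real_inner_smul_left] at h1
  have e1 : ⟪gradient g x, y - x⟫_ℝ
      = ⟪gradient g x, y - xplus⟫_ℝ + ⟪gradient g x, xplus - x⟫_ℝ := by
    rw [← inner_add_right, sub_add_sub_cancel]
  have e2 : ⟪gradient d x, y - x⟫_ℝ
      = ⟪gradient d x, y - xplus⟫_ℝ + ⟪gradient d x, xplus - x⟫_ℝ := by
    rw [← inner_add_right, sub_add_sub_cancel]
  have key : g xplus + h xplus + 2 * L * (d y - d xplus - ⟪gradient d xplus, y - xplus⟫_ℝ)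
      ≤ (g x + ⟪gradient g x, y - x⟫_ℝ + h y + ε / 2)
        + 2 * L * (d y - d x - ⟪gradient d x, y - x⟫_ℝ) := by
    nlinarith [mul_le_mul_of_nonneg_left h2 (by positivity : (0:ℝ) ≤ 2 * L)]
  have h2L : (2 * L) ≠ 0 := by positivity
  rw [← sub_nonneg] at key ⊢
  have hrw : 1 / (2 * L) * (((g x + ⟪gradient g x, y - x⟫_ℝ + h y + ε / 2)
        + 2 * L * (d y - d x - ⟪gradient d x, y - x⟫_ℝ))
      - (g xplus + h xplus + 2 * L * (d y - d xplus - ⟪gradient d xplus, y - xplus⟫_ℝ)))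
      = 1 / (2 * L) * (g x + ⟪gradient g x, y - x⟫_ℝ + h y + ε / 2)
          + (d y - d x - ⟪gradient d x, y - x⟫_ℝ)
        - (1 / (2 * L) * (g xplus + h xplus)
          + (d y - d xplus - ⟪gradient d xplus, y - xplus⟫_ℝ)) := by
    field_simp
  rw [← hrw]
  positivity
end

section
/- Let T ∈ ℕ and ε > 0. Let d : ℝ^p → ℝ be a differentiable 1-strongly convex function with Bregman distance ξ(x,y) := d(y) − d(x) − ⟨∇d(x), y − x⟩, let h : ℝ^p → ℝ be convex, and for each t = 0,…,T let g_t : ℝ^p → ℝ be convex and differentiable. Let points x_0, x_1, …, x_{T+1} ∈ ℝ^p and constants L_1, …, L_{T+1} > 0 satisfy, for each t = 0,…,T: (i) for all y ∈ ℝ^p, ⟨∇g_t(x_t) + 2L_{t+1}(∇d(x_{t+1}) − ∇d(x_t)), y − x_{t+1}⟩ + h(y) − h(x_{t+1}) ≥ 0; (ii) g_t(x_{t+1}) ≤ g_t(x_t) + ⟨∇g_t(x_t), x_{t+1} − x_t⟩ + L_{t+1}‖x_{t+1} − x_t‖² + ε/2. Then for every y ∈ ℝ^p, ∑_{t=0}^{T}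 (1/L_{t+1})·[(g_t(x_{t+1}) + h(x_{t+1})) − (g_t(y) + h(y))] ≤ (ε/2)·∑_{t=0}^{T} (1/L_{t+1}) + 2·ξ(x_0, y). -/
open scoped InnerProductSpace

/-!
Each step is one round of mirror descent: convexity of `g t` and the line-search condition bound
`g t (x (t+1)) - g t y` by `⟪∇g t (x t), x (t+1) - y⟫ + L ‖x (t+1) - x t‖² + ε/2`, the optimality
condition (i) turns the linear term plus `h (x (t+1)) - h y` into Bregman distances through the
three-point identity, and strong convexity of `d` absorbs the quadratic term. After scaling by
`1 / L (t+1)` the Bregman terms `2 ξ(x t, y) - 2 ξ(x (t+1), y)` telescope, and `ξ(x (T+1), y) ≥ 0`.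
-/

variable {E : Type*} [NormedAddCommGroup E] [InnerProductSpace ℝ E]

theorem ConvexOn.add_fderiv_le {s : Set E} {f : E → ℝ} (hf : ConvexOn ℝ s f) {a b : E}
    (ha : a ∈ s) (hb : b ∈ s) (hfa : DifferentiableAt ℝ f a) :
    f a + fderiv ℝ f a (b - a) ≤ f b := by
  have hline : HasDerivAt (f ∘ AffineMap.lineMap (k := ℝ) a b) (fderiv ℝ f a (b - a)) 0 := by
    have hfa' : HasFDerivAt f (fderiv ℝ f a) (AffineMap.lineMap (k := ℝ) a b 0) := by
      simpa using hfa.hasFDerivAt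
    exact hfa'.comp_hasDerivAt 0 AffineMap.hasDerivAt_lineMap
  have hslope := (hf.comp_affineMap (AffineMap.lineMap a b)).le_slope_of_hasDerivAt
    (by simpa using ha) (by simpa using hb) one_pos hline
  simp only [slope_def_field, Function.comp_apply, AffineMap.lineMap_apply_zero,
    AffineMap.lineMap_apply_one, sub_zero, div_one] at hslope
  linarith

variable [CompleteSpace E]

theorem ConvexOn.add_inner_gradient_le {s : Set E} {f : E → ℝ} (hf : ConvexOn ℝ s f) {a b : E}
    (ha : a ∈ s) (hb : b ∈ s) (hfa : DifferentiableAt ℝ f a) :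
    f a + ⟪gradient f a, b - a⟫_ℝ ≤ f b := by
  simpa only [gradient, InnerProductSpace.toDual_symm_apply] using hf.add_fderiv_le ha hb hfa

/-- `bregman d x y` is the paper's `ξ(x, y)`. -/
noncomputable def bregman (d : E → ℝ) (x y : E) : ℝ :=
  d y - d x - ⟪gradient d x, y - x⟫_ℝ

theorem inner_gradient_sub_gradient_eq_bregman (d : E → ℝ) (a b y : E) :
    ⟪gradient d b - gradient d a, y - b⟫_ℝ = bregman d a y - bregman d b y - bregman d a b := by
  simp only [bregman, inner_sub_left, inner_sub_right]
  ring

section StronglyConvex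

variable {d : E → ℝ} (hd : ∀ x y : E, d x + ⟪gradient d x, y - x⟫_ℝ + 1 / 2 * ‖y - x‖ ^ 2 ≤ d y)
include hd

theorem half_sq_norm_le_bregman (x y : E) : 1 / 2 * ‖y - x‖ ^ 2 ≤ bregman d x y := by
  have := hd x y
  unfold bregman
  linarith

theorem bregman_nonneg (x y : E) : 0 ≤ bregman d x y :=
  (half_sq_norm_le_bregman hd x y).trans' (by positivity)

theorem sub_le_of_mirror_descent_step {g h : E → ℝ} (hg : ConvexOn ℝ Set.univ g)
    {a b y : E} (hga : DifferentiableAt ℝ g a) {L ε : ℝ} (hL : 0 ≤ L)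
    (hopt : ⟪gradient g a + (2 * L) • (gradient d b - gradient d a), y - b⟫_ℝ + h y - h b ≥ 0)
    (hls : g b ≤ g a + ⟪gradient g a, b - a⟫_ℝ + L * ‖b - a‖ ^ 2 + ε / 2) :
    (g b + h b) - (g y + h y) ≤ ε / 2 + 2 * L * (bregman d a y - bregman d b y) := by
  have hgrad := hg.add_inner_gradient_le (Set.mem_univ a) (Set.mem_univ y) hga
  rw [inner_add_left, real_inner_smul_left, inner_gradient_sub_gradient_eq_bregman] at hopt
  have hlin : ⟪gradient g a, b - a⟫_ℝ - ⟪gradient g a, y - a⟫_ℝ = -⟪gradient g a, y - b⟫_ℝ := by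
    simp only [inner_sub_right]
    ring
  have hquad : L * ‖b - a‖ ^ 2 ≤ 2 * L * bregman d a b := by
    nlinarith [half_sq_norm_le_bregman hd a b]
  nlinarith

theorem weighted_sub_le_of_mirror_descent_step {g h : E → ℝ} (hg : ConvexOn ℝ Set.univ g)
    {a b y : E} (hga : DifferentiableAt ℝ g a) {L ε : ℝ} (hL : 0 < L)
    (hopt : ⟪gradient g a + (2 * L) • (gradient d b - gradient d a), y - b⟫_ℝ + h y - h b ≥ 0)
    (hls : g b ≤ g a + ⟪gradient g a, b - a⟫_ℝ + L * ‖b - a‖ ^ 2 + ε / 2) :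
    1 / L * ((g b + h b) - (g y + h y))
      ≤ ε / 2 * (1 / L) + 2 * (bregman d a y - bregman d b y) := by
  have hstep := sub_le_of_mirror_descent_step hd hg hga hL.le hopt hls
  calc 1 / L * ((g b + h b) - (g y + h y))
      ≤ 1 / L * (ε / 2 + 2 * L * (bregman d a y - bregman d b y)) := by gcongr
    _ = ε / 2 * (1 / L) + 2 * (bregman d a y - bregman d b y) := by field_simp

end StronglyConvex

theorem statement7_general {p : ℕ} (T : ℕ) (ε : ℝ)
    (d : EuclideanSpace ℝ (Fin p) → ℝ)
    (hdsc : ∀ x y : EuclideanSpace ℝ (Fin p),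
      d x + ⟪gradient d x, y - x⟫_ℝ + 1 / 2 * ‖y - x‖ ^ 2 ≤ d y)
    (h : EuclideanSpace ℝ (Fin p) → ℝ)
    (g : ℕ → EuclideanSpace ℝ (Fin p) → ℝ)
    (hgconv : ∀ t ≤ T, ConvexOn ℝ Set.univ (g t))
    (hgdiff : ∀ t ≤ T, Differentiable ℝ (g t))
    (x : ℕ → EuclideanSpace ℝ (Fin p)) (L : ℕ → ℝ)
    (hL : ∀ t ≤ T, 0 < L (t + 1))
    (hopt : ∀ t ≤ T, ∀ y : EuclideanSpace ℝ (Fin p),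
      ⟪gradient (g t) (x t)
          + (2 * L (t + 1)) • (gradient d (x (t + 1)) - gradient d (x t)),
        y - x (t + 1)⟫_ℝ + h y - h (x (t + 1)) ≥ 0)
    (hls : ∀ t ≤ T,
      g t (x (t + 1)) ≤ g t (x t) + ⟪gradient (g t) (x t), x (t + 1) - x t⟫_ℝ
        + L (t + 1) * ‖x (t + 1) - x t‖ ^ 2 + ε / 2) :
    ∀ y : EuclideanSpace ℝ (Fin p),
      ∑ t ∈ Finset.range (T + 1),
          1 / L (t + 1) * ((g t (x (t + 1)) + h (x (t + 1))) - (g t y + h y))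
        ≤ ε / 2 * ∑ t ∈ Finset.range (T + 1), 1 / L (t + 1)
          + 2 * (d y - d (x 0) - ⟪gradient d (x 0), y - x 0⟫_ℝ) := by
  intro y
  have hstep : ∀ t ∈ Finset.range (T + 1),
      1 / L (t + 1) * ((g t (x (t + 1)) + h (x (t + 1))) - (g t y + h y))
        ≤ ε / 2 * (1 / L (t + 1)) + 2 * (bregman d (x t) y - bregman d (x (t + 1)) y) := by
    intro t ht
    have htT : t ≤ T := Nat.lt_succ_iff.mp (Finset.mem_range.mp ht)
    exact weighted_sub_le_of_mirror_descent_step hdsc (hgconv t htT) (hgdiff t htT _)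
      (hL t htT) (hopt t htT y) (hls t htT)
  have htelescope : ∑ t ∈ Finset.range (T + 1),
      (ε / 2 * (1 / L (t + 1)) + 2 * (bregman d (x t) y - bregman d (x (t + 1)) y))
        = ε / 2 * ∑ t ∈ Finset.range (T + 1), 1 / L (t + 1)
          + 2 * (bregman d (x 0) y - bregman d (x (T + 1)) y) := by
    rw [Finset.sum_add_distrib, ← Finset.mul_sum, ← Finset.mul_sum,
      Finset.sum_range_sub' (fun t => bregman d (x t) y)]
  have hlast := bregman_nonneg hdsc (x (T + 1)) y
  have := (Finset.sum_le_sum hstep).trans_eq htelescope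
  unfold bregman at this hlast
  linarith

/-- Regret bound of the generic O-UPGM. With `d` a differentiable 1-strongly convex
prox-function, `h` convex, each `g t` convex and differentiable, points `x 0, …, x (T+1)`
and constants `L 1, …, L (T+1) > 0` satisfying the optimality condition (i) and the
line-search condition (ii) at each step, for every `y`,
`∑_{t=0}^{T} (1/L_{t+1})·[(g_t(x_{t+1}) + h(x_{t+1})) − (g_t(y) + h(y))]
  ≤ (ε/2)·∑_{t=0}^{T} (1/L_{t+1}) + 2·ξ(x_0, y)`. -/
theorem statement7 {p : ℕ} (T : ℕ) (ε : ℝ) (hε : 0 < ε)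
    (d : EuclideanSpace ℝ (Fin p) → ℝ) (hd : Differentiable ℝ d)
    (hdsc : ∀ x y : EuclideanSpace ℝ (Fin p),
      d x + ⟪gradient d x, y - x⟫_ℝ + 1 / 2 * ‖y - x‖ ^ 2 ≤ d y)
    (h : EuclideanSpace ℝ (Fin p) → ℝ) (hh : ConvexOn ℝ Set.univ h)
    (g : ℕ → EuclideanSpace ℝ (Fin p) → ℝ)
    (hgconv : ∀ t ≤ T, ConvexOn ℝ Set.univ (g t))
    (hgdiff : ∀ t ≤ T, Differentiable ℝ (g t))
    (x : ℕ → EuclideanSpace ℝ (Fin p)) (L : ℕ → ℝ)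
    (hL : ∀ t ≤ T, 0 < L (t + 1))
    (hopt : ∀ t ≤ T, ∀ y : EuclideanSpace ℝ (Fin p),
      ⟪gradient (g t) (x t)
          + (2 * L (t + 1)) • (gradient d (x (t + 1)) - gradient d (x t)),
        y - x (t + 1)⟫_ℝ + h y - h (x (t + 1)) ≥ 0)
    (hls : ∀ t ≤ T,
      g t (x (t + 1)) ≤ g t (x t) + ⟪gradient (g t) (x t), x (t + 1) - x t⟫_ℝ
        + L (t + 1) * ‖x (t + 1) - x t‖ ^ 2 + ε / 2) :
    ∀ y : EuclideanSpace ℝ (Fin p),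
      ∑ t ∈ Finset.range (T + 1),
          1 / L (t + 1) * ((g t (x (t + 1)) + h (x (t + 1))) - (g t y + h y))
        ≤ ε / 2 * ∑ t ∈ Finset.range (T + 1), 1 / L (t + 1)
          + 2 * (d y - d (x 0) - ⟪gradient d (x 0), y - x 0⟫_ℝ) :=
  statement7_general T ε d hdsc h g hgconv hgdiff x L hL hopt hls
end

section
/- Let T ∈ ℕ, ε > 0. Let d : ℝ^p → ℝ be a differentiable convex function with Bregman distance ξ(x,y) := d(y) − d(x) − ⟨∇d(x), y − x⟩, with x_0 a minimizer of d. Let h : ℝ^p → ℝ be convex and for each t = 0,…,T let g_t : ℝ^p → ℝ be convex and differentiable. Let L_1,…,L_{T+1} > 0 and define the estimate functions φ_0(x) := ξ(x_0, x) and φ_{t+1}(x) := φ_t(x) + (1/(2L_{t+1}))·[g_t(x_t) + ⟨∇g_t(x_t), x − x_t⟩ + h(x)], where for each t ≥ 0 the point x_{t+1} is a minimizer of φ_{t+1}. Suppose that for each t = 0,…,T there is a point y_t with g_t(y_t) + h(y_t) ≤ (inf over x of [g_t(x_t) + ⟨∇g_t(x_t), x − x_t⟩ + 2L_{t+1}·ξ(x_t,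 x) + h(x)]) + ε/2. Then for all t = 0,…,T, ∑_{i=0}^{t} (1/(2L_{i+1}))·(g_i(y_i) + h(y_i)) ≤ φ_{t+1}(x_{t+1}) + (ε/4)·∑_{i=0}^{t} (1/L_{i+1}). -/
/-!
The invariant is `A_t + ξ(x_t, ·) ≤ φ_t`, where `A_t` is the left-hand side minus the error sum.
Every `φ_t - d` is convex (an affine function plus nonnegative multiples of `h`), so first-order
optimality of the minimizer `x_{t+1}` of `φ_{t+1} = d + (φ_{t+1} - d)` gives
`φ_{t+1} ≥ φ_{t+1}(x_{t+1}) + ξ(x_{t+1}, ·)`. Evaluating the invariant at `x_{t+1}` and using the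
acceptance condition at `z = x_{t+1}` gives `A_{t+1} ≤ φ_{t+1}(x_{t+1})`, which propagates it.
-/

open scoped InnerProductSpace
open Set

section

variable {E : Type*} [NormedAddCommGroup E] [InnerProductSpace ℝ E]

theorem convexOn_univ_const_add_inner_sub (c : ℝ) (w b : E) :
    ConvexOn ℝ univ fun z => c + ⟪w, z - b⟫_ℝ := by
  refine ⟨convex_univ, fun u _ v _ a a' _ _ hab => le_of_eq ?_⟩
  simp only [smul_eq_mul, inner_sub_right, inner_add_right, real_inner_smul_right]
  linear_combination (⟪w, b⟫_ℝ - c) * hab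

theorem convexOn_sub_of_eq_add_mul {s : Set E} {φ φ' d ℓ : E → ℝ} {c : ℝ}
    (hφ : ConvexOn ℝ s (φ - d)) (hℓ : ConvexOn ℝ s ℓ) (hc : 0 ≤ c)
    (hφ' : ∀ z, φ' z = φ z + c * ℓ z) :
    ConvexOn ℝ s (φ' - d) := by
  have heq : φ' - d = (φ - d) + c • ℓ := by
    funext z
    simp only [Pi.sub_apply, Pi.add_apply, Pi.smul_apply, smul_eq_mul, hφ']
    ring
  rw [heq]
  exact hφ.add (hℓ.smul hc)

variable [CompleteSpace E]

noncomputable def bregmanDiv (d : E → ℝ) (x y : E) : ℝ :=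
  d y - d x - ⟪gradient d x, y - x⟫_ℝ

theorem bregmanDiv_self (d : E → ℝ) (x : E) : bregmanDiv d x x = 0 := by
  simp [bregmanDiv]

theorem convexOn_univ_bregmanDiv_sub (d : E → ℝ) (x : E) :
    ConvexOn ℝ univ (bregmanDiv d x - d) := by
  have heq : bregmanDiv d x - d = fun z => -d x + ⟪-gradient d x, z - x⟫_ℝ := by
    funext z
    simp only [Pi.sub_apply, bregmanDiv, inner_neg_left]
    ring
  rw [heq]
  exact convexOn_univ_const_add_inner_sub _ _ _

theorem neg_inner_gradient_le_of_isMinOn_add {d q : E → ℝ} {s : Set E} {x z : E}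
    (hd : DifferentiableAt ℝ d x) (hq : ConvexOn ℝ s q) (hx : x ∈ s) (hz : z ∈ s)
    (hmin : IsMinOn (d + q) s x) :
    -⟪gradient d x, z - x⟫_ℝ ≤ q z - q x := by
  -- `F ≥ F 0` on `[0, 1]`, since `q` lies below its chord and `x` minimizes `d + q`;
  -- Fermat's rule at the endpoint `0` then gives `F' 0 ≥ 0`.
  let F : ℝ → ℝ := fun t => d (x + t • (z - x)) + t * (q z - q x)
  have hF : HasDerivAt F (⟪gradient d x, z - x⟫_ℝ + (q z - q x)) 0 := by
    have hline : HasDerivAt (fun t : ℝ => x + t • (z - x)) (z - x) 0 := by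
      simpa using ((hasDerivAt_id (0 : ℝ)).smul_const (z - x)).const_add x
    have hd' : HasFDerivAt d (InnerProductSpace.toDual ℝ E (gradient d x))
        (x + (0 : ℝ) • (z - x)) := by
      simpa using hd.hasGradientAt.hasFDerivAt
    have := (hd'.comp_hasDerivAt 0 hline).add ((hasDerivAt_id (0 : ℝ)).mul_const (q z - q x))
    rwa [InnerProductSpace.toDual_apply_apply, one_mul] at this
  have hFmin : IsMinOn F (Icc 0 1) 0 := by
    rintro t ⟨ht0, ht1⟩
    have ht : 0 ≤ 1 - t := sub_nonneg.2 ht1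
    have hseg : (1 - t) • x + t • z = x + t • (z - x) := by module
    have hchord := hq.2 hx hz ht ht0 (sub_add_cancel 1 t)
    have hmem : x + t • (z - x) ∈ s := hseg ▸ hq.1 hx hz ht ht0 (sub_add_cancel 1 t)
    have hle : d x + q x ≤ d (x + t • (z - x)) + q (x + t • (z - x)) := hmin hmem
    simp only [hseg, smul_eq_mul] at hchord
    show F 0 ≤ F t
    simp only [F, zero_smul, add_zero, zero_mul]
    nlinarith
  have hcone : (1 : ℝ) ∈ posTangentConeAt (Icc 0 1) 0 :=
    mem_posTangentConeAt_of_segment_subset (by rw [zero_add, segment_eq_Icc zero_le_one])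
  have := hFmin.localize.hasFDerivWithinAt_nonneg hF.hasDerivWithinAt.hasFDerivWithinAt hcone
  rw [ContinuousLinearMap.toSpanSingleton_apply, one_smul] at this
  linarith

theorem add_bregmanDiv_le_of_isMinOn {d φ : E → ℝ} {x : E} (hd : DifferentiableAt ℝ d x)
    (hφ : ConvexOn ℝ univ (φ - d)) (hmin : IsMinOn φ univ x) (z : E) :
    φ x + bregmanDiv d x z ≤ φ z := by
  have := neg_inner_gradient_le_of_isMinOn_add hd hφ (mem_univ x) (mem_univ z)
    (by simpa using hmin)
  simp only [Pi.sub_apply] at this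
  simp only [bregmanDiv]
  linarith

theorem add_bregmanDiv_le_succ {d φ φ' ℓ : E → ℝ} {x x' : E} {A a ε L : ℝ}
    (hd : DifferentiableAt ℝ d x') (hL : 0 < L)
    (hφ : ∀ z, A + bregmanDiv d x z ≤ φ z)
    (hφ' : ∀ z, φ' z = φ z + 1 / (2 * L) * ℓ z)
    (hconv : ConvexOn ℝ univ (φ' - d)) (hmin : IsMinOn φ' univ x')
    (ha : a ≤ ℓ x' + 2 * L * bregmanDiv d x x' + ε / 2) (z : E) :
    A + 1 / (2 * L) * a - ε / 4 * (1 / L) + bregmanDiv d x' z ≤ φ' z := by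
  have hscaled : 1 / (2 * L) * a ≤ 1 / (2 * L) * ℓ x' + bregmanDiv d x x' + ε / 4 * (1 / L) :=
    calc 1 / (2 * L) * a ≤ 1 / (2 * L) * (ℓ x' + 2 * L * bregmanDiv d x x' + ε / 2) := by gcongr
      _ = _ := by field_simp; ring
  have hopt := add_bregmanDiv_le_of_isMinOn hd hconv hmin z
  have hprev := hφ x'
  rw [hφ'] at hopt
  linarith

end

theorem statement10_general {p : ℕ} (T : ℕ) (ε : ℝ)
    (d : EuclideanSpace ℝ (Fin p) → ℝ) (hd : Differentiable ℝ d)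
    (xi : EuclideanSpace ℝ (Fin p) → EuclideanSpace ℝ (Fin p) → ℝ)
    (hxi : ∀ x y : EuclideanSpace ℝ (Fin p), xi x y = d y - d x - ⟪gradient d x, y - x⟫_ℝ)
    (h : EuclideanSpace ℝ (Fin p) → ℝ) (hh : ConvexOn ℝ Set.univ h)
    (g : ℕ → EuclideanSpace ℝ (Fin p) → ℝ)
    (L : ℕ → ℝ) (hL : ∀ t ≤ T, 0 < L (t + 1))
    (x : ℕ → EuclideanSpace ℝ (Fin p))
    (φ : ℕ → EuclideanSpace ℝ (Fin p) → ℝ)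
    (hφ0 : ∀ z : EuclideanSpace ℝ (Fin p), φ 0 z = xi (x 0) z)
    (hφsucc : ∀ t ≤ T, ∀ z : EuclideanSpace ℝ (Fin p),
      φ (t + 1) z = φ t z
        + 1 / (2 * L (t + 1)) * (g t (x t) + ⟪gradient (g t) (x t), z - x t⟫_ℝ + h z))
    (hxmin : ∀ t ≤ T, ∀ z : EuclideanSpace ℝ (Fin p), φ (t + 1) (x (t + 1)) ≤ φ (t + 1) z)
    (y : ℕ → EuclideanSpace ℝ (Fin p))
    (hy : ∀ t ≤ T, ∀ z : EuclideanSpace ℝ (Fin p),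
      g t (y t) + h (y t) ≤ g t (x t) + ⟪gradient (g t) (x t), z - x t⟫_ℝ
        + 2 * L (t + 1) * xi (x t) z + h z + ε / 2) :
    ∀ t ≤ T,
      ∑ i ∈ Finset.range (t + 1), 1 / (2 * L (i + 1)) * (g i (y i) + h (y i))
        ≤ φ (t + 1) (x (t + 1)) + ε / 4 * ∑ i ∈ Finset.range (t + 1), 1 / L (i + 1) := by
  obtain rfl : xi = bregmanDiv d := funext fun u => funext (hxi u)
  set A : ℕ → ℝ := fun t => ∑ i ∈ Finset.range t, 1 / (2 * L (i + 1)) * (g i (y i) + h (y i))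
      - ε / 4 * ∑ i ∈ Finset.range t, 1 / L (i + 1) with hA
  have hconv : ∀ t ≤ T + 1, ConvexOn ℝ univ (φ t - d) := by
    intro t
    induction t with
    | zero =>
      intro _
      rw [show φ 0 = bregmanDiv d (x 0) from funext hφ0]
      exact convexOn_univ_bregmanDiv_sub d (x 0)
    | succ t ih =>
      intro ht
      have hLt := hL t (by omega)
      exact convexOn_sub_of_eq_add_mul (ih (by omega))
        ((convexOn_univ_const_add_inner_sub _ _ _).add hh) (by positivity) (hφsucc t (by omega))
  have hinv : ∀ t ≤ T + 1, ∀ z, A t + bregmanDiv d (x t) z ≤ φ t z := by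
    intro t
    induction t with
    | zero => intro _ z; simp [hA, hφ0]
    | succ t ih =>
      intro ht z
      have hstep := add_bregmanDiv_le_succ
        (ℓ := fun z => g t (x t) + ⟪gradient (g t) (x t), z - x t⟫_ℝ + h z)
        (a := g t (y t) + h (y t)) (ε := ε)
        (hd _) (hL t (by omega)) (ih (by omega)) (hφsucc t (by omega)) (hconv _ ht)
        (fun w _ => hxmin t (by omega) w) (by linarith [hy t (by omega) (x (t + 1))]) z
      simp only [hA, Finset.sum_range_succ] at hstep ⊢
      linarith
  intro t ht
  simpa [hA, bregmanDiv_self] using hinv (t + 1) (by omega) (x (t + 1))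

/-- Estimate-sequence inequality of O-UDGM. With `d` differentiable convex having
Bregman distance `ξ(x,y) = d(y) − d(x) − ⟨∇d(x), y − x⟩`, `x 0` a minimizer of `d`,
`h` convex, each `g t` convex differentiable, estimate functions
`φ_0(x) = ξ(x_0, x)`, `φ_{t+1}(x) = φ_t(x) + (1/(2L_{t+1}))[g_t(x_t) + ⟨∇g_t(x_t), x − x_t⟩ + h(x)]`,
`x (t+1)` a minimizer of `φ_{t+1}`, and `y t` satisfying
`g_t(y_t) + h(y_t) ≤ inf_x [g_t(x_t) + ⟨∇g_t(x_t), x − x_t⟩ + 2L_{t+1}ξ(x_t, x) + h(x)] + ε/2`,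
we have for all `t ≤ T`:
`∑_{i=0}^{t} (1/(2L_{i+1}))(g_i(y_i) + h(y_i)) ≤ φ_{t+1}(x_{t+1}) + (ε/4)∑_{i=0}^{t} (1/L_{i+1})`. -/
theorem statement10 {p : ℕ} (T : ℕ) (ε : ℝ) (hε : 0 < ε)
    (d : EuclideanSpace ℝ (Fin p) → ℝ) (hd : Differentiable ℝ d)
    (hdconv : ConvexOn ℝ Set.univ d)
    (xi : EuclideanSpace ℝ (Fin p) → EuclideanSpace ℝ (Fin p) → ℝ)
    (hxi : ∀ x y : EuclideanSpace ℝ (Fin p), xi x y = d y - d x - ⟪gradient d x, y - x⟫_ℝ)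
    (h : EuclideanSpace ℝ (Fin p) → ℝ) (hh : ConvexOn ℝ Set.univ h)
    (g : ℕ → EuclideanSpace ℝ (Fin p) → ℝ)
    (hgconv : ∀ t ≤ T, ConvexOn ℝ Set.univ (g t))
    (hgdiff : ∀ t ≤ T, Differentiable ℝ (g t))
    (L : ℕ → ℝ) (hL : ∀ t ≤ T, 0 < L (t + 1))
    (x : ℕ → EuclideanSpace ℝ (Fin p))
    (hx0 : ∀ z : EuclideanSpace ℝ (Fin p), d (x 0) ≤ d z)
    (φ : ℕ → EuclideanSpace ℝ (Fin p) → ℝ)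
    (hφ0 : ∀ z : EuclideanSpace ℝ (Fin p), φ 0 z = xi (x 0) z)
    (hφsucc : ∀ t ≤ T, ∀ z : EuclideanSpace ℝ (Fin p),
      φ (t + 1) z = φ t z
        + 1 / (2 * L (t + 1)) * (g t (x t) + ⟪gradient (g t) (x t), z - x t⟫_ℝ + h z))
    (hxmin : ∀ t ≤ T, ∀ z : EuclideanSpace ℝ (Fin p), φ (t + 1) (x (t + 1)) ≤ φ (t + 1) z)
    (y : ℕ → EuclideanSpace ℝ (Fin p))
    (hy : ∀ t ≤ T, ∀ z : EuclideanSpace ℝ (Fin p),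
      g t (y t) + h (y t) ≤ g t (x t) + ⟪gradient (g t) (x t), z - x t⟫_ℝ
        + 2 * L (t + 1) * xi (x t) z + h z + ε / 2) :
    ∀ t ≤ T,
      ∑ i ∈ Finset.range (t + 1), 1 / (2 * L (i + 1)) * (g i (y i) + h (y i))
        ≤ φ (t + 1) (x (t + 1)) + ε / 4 * ∑ i ∈ Finset.range (t + 1), 1 / L (i + 1) :=
  statement10_general T ε d hd xi hxi h hh g L hL x φ hφ0 hφsucc hxmin y hy
end

section
/- Let T ∈ ℕ, ε > 0, v ∈ [0,1], M_v > 0, and set γ := (1/ε)^{(1−v)/(1+v)}·M_v^{2/(1+v)}. Let d : ℝ^p → ℝ be a differentiable 1-strongly convex function with Bregman distance ξ, with x_0 a minimizer of d, let h : ℝ^p → ℝ be convex, and for each t = 0,…,T let g_t : ℝ^p → ℝ be convex and differentiable with Hölder continuous gradient of exponent v and constant at most M_v. Define φ_0(x) := ξ(x_0, x) and φ_{t+1}(x) := φ_t(x) + (1/(2γ))·[g_t(x_t) + ⟨∇g_t(x_t), x − x_t⟩ + h(x)], let x_{t+1} be a minimizer of φ_{t+1}, and let y_t be a minimizer over x of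 g_t(x_t) + ⟨∇g_t(x_t), x − x_t⟩ + 2γ·ξ(x_t, x) + h(x). Then for every x* ∈ ℝ^p, ∑_{t=0}^{T} [(g_t(y_t) + h(y_t)) − (g_t(x*) + h(x*))] ≤ (ε/2)·(T+1) + 2·ξ(x_0, x*)·γ. -/
open scoped InnerProductSpace
open Set

/-! Because `φ t` is `ξ(x₀, ·)` plus a convex function and `x t` minimizes it, the Bregman
three-point inequality `φ t (x t) + ξ(x t, z) ≤ φ t z` holds. Convexity and the Hölder condition
give `g(y) ≤ g(x) + ⟪∇g x, y - x⟫ + M ‖y - x‖^(1+v)`, and weighted AM–GM with weights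
`(1 ± v)/2` (which is where `γ` comes from) turns `M s^(1+v)` into `γ s² + ε/2 ≤ 2γ ξ + ε/2`.
Hence each `g t (y t) + h (y t) - ε/2` is at most the growth of `2γ φ t (x t)` in step `t`;
summing, the left side is at most `2γ φ (T+1) (x (T+1)) ≤ 2γ φ (T+1) x*`, and the
linearizations of `g t` in `φ (T+1) x*` lie below `g t x*`. -/

section Convex

variable {E : Type*} [NormedAddCommGroup E] [NormedSpace ℝ E]

theorem ConvexOn.le_of_le_add_of_hasFDerivAt_zero {q r : E → ℝ} {x : E}
    (hq : ConvexOn ℝ univ q) (hr : HasFDerivAt r (0 : E →L[ℝ] ℝ) x) (hrx : r x = 0)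
    (hmin : ∀ w, q x ≤ q w + r w) (z : E) : q x ≤ q z := by
  -- `l (q x - q z) ≤ r (x + l • (z - x)) = o(l)` for `l ∈ (0, 1]`, by convexity of `q`
  have hslope := (hr.hasLineDerivAt (z - x)).tendsto_slope_zero_right
  simp only [zero_apply, hrx, sub_zero, smul_eq_mul] at hslope
  suffices q x - q z ≤ 0 by linarith
  refine ge_of_tendsto hslope ?_
  filter_upwards [Ioc_mem_nhdsGT zero_lt_one] with l ⟨hl0, hl1⟩
  have hconv := hq.2 (mem_univ x) (mem_univ z) (sub_nonneg.2 hl1) hl0.le (sub_add_cancel 1 l)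
  rw [show (1 - l) • x + l • z = x + l • (z - x) by module, smul_eq_mul, smul_eq_mul] at hconv
  rw [le_inv_mul_iff₀ hl0]
  nlinarith [hmin (x + l • (z - x))]

end Convex

section InnerProduct

variable {E : Type*} [NormedAddCommGroup E] [InnerProductSpace ℝ E]

theorem ConvexOn.add_inner_add_const {f : E → ℝ} (hf : ConvexOn ℝ univ f) (v : E) (c : ℝ) :
    ConvexOn ℝ univ (fun w => f w + ⟪v, w⟫_ℝ + c) :=
  (hf.add ((innerₗ E v).convexOn convex_univ)).add_const c

variable [CompleteSpace E]

theorem hasFDerivAt_sub_sub_inner_gradient {f : E → ℝ} {a : E} (hf : DifferentiableAt ℝ f a) :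
    HasFDerivAt (fun w => f w - f a - ⟪gradient f a, w - a⟫_ℝ) (0 : E →L[ℝ] ℝ) a := by
  have hlin : HasFDerivAt (fun w => ⟪gradient f a, w - a⟫_ℝ) (innerSL ℝ (gradient f a)) a :=
    (((innerSL ℝ _).hasFDerivAt (x := a)).sub_const ⟪gradient f a, a⟫_ℝ).congr_of_eventuallyEq
      (Filter.Eventually.of_forall fun w => by simp [inner_sub_right])
  refine ((hf.hasGradientAt.hasFDerivAt.sub_const (f a)).sub hlin).congr_fderiv ?_
  ext; simp

theorem ConvexOn.add_inner_gradient_le_s12 {f : E → ℝ} {x : E} (hf : ConvexOn ℝ univ f)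
    (hfx : DifferentiableAt ℝ f x) (z : E) : f x + ⟪gradient f x, z - x⟫_ℝ ≤ f z := by
  have hr := (hasFDerivAt_sub_sub_inner_gradient hfx).neg
  rw [neg_zero] at hr
  have hq := hf.add_inner_add_const (-gradient f x) ⟪gradient f x, x⟫_ℝ
  have := hq.le_of_le_add_of_hasFDerivAt_zero hr (by simp)
    (fun w => by simp only [Pi.neg_apply, inner_neg_left, inner_sub_right]; linarith) z
  simp only [inner_neg_left, inner_sub_right] at this ⊢
  linarith

theorem bregman_three_point {d φ : E → ℝ} {xi : E → E → ℝ}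
    (hxi : ∀ a b, xi a b = d b - d a - ⟪gradient d a, b - a⟫_ℝ) {x₀ x : E}
    (hd : DifferentiableAt ℝ d x) (hψ : ConvexOn ℝ univ (fun w => φ w - xi x₀ w))
    (hmin : ∀ w, φ x ≤ φ w) (z : E) : φ x + xi x z ≤ φ z := by
  have hq : ConvexOn ℝ univ (fun w => φ w - xi x w) := by
    refine (hψ.add_inner_add_const (gradient d x - gradient d x₀)
      (d x - d x₀ + ⟪gradient d x₀, x₀⟫_ℝ - ⟪gradient d x, x⟫_ℝ)).congr fun w _ => ?_
    simp only [hxi, inner_sub_left, inner_sub_right]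
    ring
  have hr : HasFDerivAt (xi x) (0 : E →L[ℝ] ℝ) x := by
    simpa only [← hxi] using hasFDerivAt_sub_sub_inner_gradient hd
  have hrx : xi x x = 0 := by simp [hxi]
  have := hq.le_of_le_add_of_hasFDerivAt_zero hr hrx (fun w => by simpa [hrx] using hmin w) z
  linarith

theorem ConvexOn.le_add_inner_gradient_add_rpow {g : E → ℝ} {M v : ℝ} (hg : ConvexOn ℝ univ g)
    (hv : 0 ≤ v) {a b : E} (hgb : DifferentiableAt ℝ g b)
    (hH : ‖gradient g b - gradient g a‖ ≤ M * ‖b - a‖ ^ v) :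
    g b ≤ g a + ⟪gradient g a, b - a⟫_ℝ + M * ‖b - a‖ ^ (1 + v) := by
  have hfirst := hg.add_inner_gradient_le_s12 hgb a
  calc g b ≤ g a + ⟪gradient g b, b - a⟫_ℝ := by
        rw [← neg_sub b a, inner_neg_right] at hfirst; linarith
    _ = g a + ⟪gradient g a, b - a⟫_ℝ + ⟪gradient g b - gradient g a, b - a⟫_ℝ := by
        rw [inner_sub_left]; ring
    _ ≤ g a + ⟪gradient g a, b - a⟫_ℝ + ‖gradient g b - gradient g a‖ * ‖b - a‖ := by
        gcongr; exact real_inner_le_norm _ _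
    _ ≤ g a + ⟪gradient g a, b - a⟫_ℝ + M * ‖b - a‖ ^ v * ‖b - a‖ := by gcongr
    _ = g a + ⟪gradient g a, b - a⟫_ℝ + M * ‖b - a‖ ^ (1 + v) := by
        rw [Real.rpow_add' (norm_nonneg _) (by linarith), Real.rpow_one]; ring

end InnerProduct

theorem mul_rpow_le_mul_sq_add_half {ε v M γ : ℝ} (hε : 0 < ε) (hv0 : 0 ≤ v) (hv1 : v ≤ 1)
    (hM : 0 ≤ M) (hγ : γ = (1 / ε) ^ ((1 - v) / (1 + v)) * M ^ (2 / (1 + v))) {s : ℝ}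
    (hs : 0 ≤ s) : M * s ^ (1 + v) ≤ γ * s ^ 2 + ε / 2 := by
  have hγ0 : 0 ≤ γ := hγ ▸ by positivity
  have hv : 1 + v ≠ 0 := by linarith
  have hprod : (γ * s ^ 2) ^ ((1 + v) / 2) * ε ^ ((1 - v) / 2) = M * s ^ (1 + v) := by
    rw [Real.mul_rpow hγ0 (by positivity), hγ, Real.mul_rpow (by positivity) (by positivity),
      ← Real.rpow_mul (by positivity), ← Real.rpow_mul hM, ← Real.rpow_natCast,
      ← Real.rpow_mul hs]
    rw [show (1 - v) / (1 + v) * ((1 + v) / 2) = (1 - v) / 2 by field_simp,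
      show 2 / (1 + v) * ((1 + v) / 2) = 1 by field_simp, Real.rpow_one]
    rw [show ((2 : ℕ) : ℝ) * ((1 + v) / 2) = 1 + v by push_cast; ring, one_div,
      Real.inv_rpow hε.le]
    field_simp
  calc M * s ^ (1 + v) = (γ * s ^ 2) ^ ((1 + v) / 2) * ε ^ ((1 - v) / 2) := hprod.symm
    _ ≤ (1 + v) / 2 * (γ * s ^ 2) + (1 - v) / 2 * ε :=
        Real.geom_mean_le_arith_mean2_weighted (by linarith) (by linarith) (by positivity) hε.le
          (by ring)
    _ ≤ γ * s ^ 2 + ε / 2 := by nlinarith [mul_nonneg hγ0 (sq_nonneg s)]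

section Potential

variable {E : Type*} {T : ℕ} {φ ℓ : ℕ → E → ℝ}

theorem eq_add_mul_sum_of_succ {c : ℝ} (hφ : ∀ t ≤ T, ∀ z, φ (t + 1) z = φ t z + c * ℓ t z) :
    ∀ n ≤ T + 1, ∀ z, φ n z = φ 0 z + c * ∑ t ∈ Finset.range n, ℓ t z := by
  intro n hn z
  induction n with
  | zero => simp
  | succ n ih => rw [hφ n (by omega), ih (by omega), Finset.sum_range_succ]; ring

theorem convexOn_sub_of_succ [AddCommGroup E] [Module ℝ E] {c : ℝ} (hc : 0 ≤ c)
    (hℓ : ∀ t ≤ T, ConvexOn ℝ univ (ℓ t))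
    (hφ : ∀ t ≤ T, ∀ z, φ (t + 1) z = φ t z + c * ℓ t z) :
    ∀ n ≤ T + 1, ConvexOn ℝ univ (fun z => φ n z - φ 0 z) := by
  intro n hn
  have hsum : ConvexOn ℝ univ (∑ t ∈ Finset.range n, ℓ t) :=
    Finset.sum_induction _ (ConvexOn ℝ univ) (fun _ _ => ConvexOn.add)
      (convexOn_const 0 convex_univ) fun t ht => hℓ t (by simp at ht; omega)
  refine (hsum.smul hc).congr fun z _ => ?_
  simp only [eq_add_mul_sum_of_succ hφ n hn z, Finset.sum_apply, smul_eq_mul]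
  ring

theorem sum_le_mul_of_potential {c : ℝ} (hc : 0 < c) {a : ℕ → ℝ} {D : E → E → ℝ} {x : ℕ → E}
    (hφ : ∀ t ≤ T, ∀ z, φ (t + 1) z = φ t z + 1 / c * ℓ t z) (hφ0 : φ 0 (x 0) = 0)
    (hthree : ∀ t ≤ T, φ t (x t) + D (x t) (x (t + 1)) ≤ φ t (x (t + 1)))
    (hstep : ∀ t ≤ T, a t ≤ ℓ t (x (t + 1)) + c * D (x t) (x (t + 1))) :
    ∀ n ≤ T + 1, ∑ t ∈ Finset.range n, a t ≤ c * φ n (x n) := by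
  intro n hn
  induction n with
  | zero => simp [hφ0]
  | succ n ih =>
    rw [Finset.sum_range_succ, hφ n (by omega), mul_add, ← mul_assoc, mul_one_div_cancel hc.ne',
      one_mul]
    linarith [ih (by omega), mul_le_mul_of_nonneg_left (hthree n (by omega)) hc.le,
      hstep n (by omega)]

end Potential

theorem bregman_three_point_of_succ {E : Type*} [NormedAddCommGroup E] [InnerProductSpace ℝ E]
    [CompleteSpace E] {T : ℕ} {φ ℓ : ℕ → E → ℝ} {d : E → ℝ} {xi : E → E → ℝ}
    (hxi : ∀ a b, xi a b = d b - d a - ⟪gradient d a, b - a⟫_ℝ) (hd : Differentiable ℝ d)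
    {c : ℝ} (hc : 0 ≤ c) (hℓ : ∀ t ≤ T, ConvexOn ℝ univ (ℓ t)) {x : ℕ → E}
    (hφ0 : ∀ z, φ 0 z = xi (x 0) z) (hφ : ∀ t ≤ T, ∀ z, φ (t + 1) z = φ t z + c * ℓ t z)
    (hxmin : ∀ t ≤ T, ∀ z, φ (t + 1) (x (t + 1)) ≤ φ (t + 1) z) :
    ∀ n ≤ T + 1, ∀ z, φ n (x n) + xi (x n) z ≤ φ n z
  | 0, _, z => by simp [hφ0, hxi]
  | n + 1, hn, z =>
    bregman_three_point (x₀ := x 0) hxi (hd _)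
      ((convexOn_sub_of_succ hc hℓ hφ (n + 1) hn).congr fun w _ => by simp [hφ0])
      (hxmin n (by omega)) z

theorem statement12_general {p : ℕ} (T : ℕ) (ε v Mv γ : ℝ) (hε : 0 < ε)
    (hv0 : 0 ≤ v) (hv1 : v ≤ 1) (hMv : 0 < Mv)
    (hγ : γ = (1 / ε) ^ ((1 - v) / (1 + v)) * Mv ^ (2 / (1 + v)))
    (d : EuclideanSpace ℝ (Fin p) → ℝ) (hd : Differentiable ℝ d)
    (hdsc : ∀ x y : EuclideanSpace ℝ (Fin p),
      d x + ⟪gradient d x, y - x⟫_ℝ + 1 / 2 * ‖y - x‖ ^ 2 ≤ d y)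
    (xi : EuclideanSpace ℝ (Fin p) → EuclideanSpace ℝ (Fin p) → ℝ)
    (hxi : ∀ x y : EuclideanSpace ℝ (Fin p), xi x y = d y - d x - ⟪gradient d x, y - x⟫_ℝ)
    (h : EuclideanSpace ℝ (Fin p) → ℝ) (hh : ConvexOn ℝ Set.univ h)
    (g : ℕ → EuclideanSpace ℝ (Fin p) → ℝ)
    (hgconv : ∀ t ≤ T, ConvexOn ℝ Set.univ (g t))
    (hgdiff : ∀ t ≤ T, Differentiable ℝ (g t))
    (hHolder : ∀ t ≤ T, ∀ x y : EuclideanSpace ℝ (Fin p),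
      ‖gradient (g t) x - gradient (g t) y‖ ≤ Mv * ‖x - y‖ ^ v)
    (x : ℕ → EuclideanSpace ℝ (Fin p))
    (φ : ℕ → EuclideanSpace ℝ (Fin p) → ℝ)
    (hφ0 : ∀ z : EuclideanSpace ℝ (Fin p), φ 0 z = xi (x 0) z)
    (hφsucc : ∀ t ≤ T, ∀ z : EuclideanSpace ℝ (Fin p),
      φ (t + 1) z = φ t z
        + 1 / (2 * γ) * (g t (x t) + ⟪gradient (g t) (x t), z - x t⟫_ℝ + h z))
    (hxmin : ∀ t ≤ T, ∀ z : EuclideanSpace ℝ (Fin p), φ (t + 1) (x (t + 1)) ≤ φ (t + 1) z)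
    (y : ℕ → EuclideanSpace ℝ (Fin p))
    (hymin : ∀ t ≤ T, ∀ z : EuclideanSpace ℝ (Fin p),
      g t (x t) + ⟪gradient (g t) (x t), y t - x t⟫_ℝ + 2 * γ * xi (x t) (y t) + h (y t)
        ≤ g t (x t) + ⟪gradient (g t) (x t), z - x t⟫_ℝ + 2 * γ * xi (x t) z + h z) :
    ∀ xstar : EuclideanSpace ℝ (Fin p),
      ∑ t ∈ Finset.range (T + 1), ((g t (y t) + h (y t)) - (g t xstar + h xstar))
        ≤ ε / 2 * (T + 1) + 2 * xi (x 0) xstar * γ := by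
  intro xstar
  have hγ0 : 0 < γ := hγ ▸ by positivity
  have hξ_sq : ∀ a b, 1 / 2 * ‖b - a‖ ^ 2 ≤ xi a b := fun a b => by linarith [hxi a b, hdsc a b]
  have hℓ : ∀ t ≤ T, ConvexOn ℝ Set.univ
      (fun z => g t (x t) + ⟪gradient (g t) (x t), z - x t⟫_ℝ + h z) := fun t _ =>
    (hh.add_inner_add_const (gradient (g t) (x t))
      (g t (x t) - ⟪gradient (g t) (x t), x t⟫_ℝ)).congr fun z _ => by
        simp only [inner_sub_right]; ring
  have hthree := bregman_three_point_of_succ hxi hd (by positivity) hℓ hφ0 hφsucc hxmin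
  have hstep : ∀ t ≤ T, g t (y t) + h (y t) - ε / 2 ≤ g t (x t)
      + ⟪gradient (g t) (x t), x (t + 1) - x t⟫_ℝ + h (x (t + 1))
      + 2 * γ * xi (x t) (x (t + 1)) := by
    intro t ht
    have hg := (hgconv t ht).le_add_inner_gradient_add_rpow hv0 (hgdiff t ht _)
      (hHolder t ht (y t) (x t))
    have hy := mul_rpow_le_mul_sq_add_half hε hv0 hv1 hMv.le hγ (norm_nonneg (y t - x t))
    nlinarith [hymin t ht (x (t + 1)), mul_le_mul_of_nonneg_left (hξ_sq (x t) (y t)) hγ0.le]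
  have hregret := sum_le_mul_of_potential (by positivity) hφsucc (by simp [hφ0, hxi])
    (fun t ht => hthree t (by omega) _) hstep (T + 1) le_rfl
  have hlin : ∀ t ∈ Finset.range (T + 1), g t (x t) + ⟪gradient (g t) (x t), xstar - x t⟫_ℝ
      + h xstar ≤ g t xstar + h xstar := fun t ht => by
    have ht : t ≤ T := Nat.lt_succ_iff.mp (Finset.mem_range.mp ht)
    linarith [(hgconv t ht).add_inner_gradient_le_s12 (hgdiff t ht (x t)) xstar]
  have hopt := mul_le_mul_of_nonneg_left (hxmin T le_rfl xstar) (by positivity : (0 : ℝ) ≤ 2 * γ)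
  rw [eq_add_mul_sum_of_succ hφsucc (T + 1) le_rfl xstar, hφ0, mul_add, ← mul_assoc,
    mul_one_div_cancel (by positivity), one_mul] at hopt
  rw [Finset.sum_sub_distrib] at hregret ⊢
  simp only [Finset.sum_const, Finset.card_range, nsmul_eq_mul, Nat.cast_add, Nat.cast_one]
    at hregret
  linarith [Finset.sum_le_sum hlin]

/-- O-UDGM regret bound with fixed step size `L_{t+1} = γ := (1/ε)^{(1−v)/(1+v)}·M_v^{2/(1+v)}`.
`d` is differentiable 1-strongly convex with Bregman distance
`ξ(x,y) = d(y) − d(x) − ⟨∇d(x), y − x⟩`, `x 0` minimizes `d`, `h` is convex, each `g t` is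
convex differentiable with Hölder continuous gradient of exponent `v` and constant at most
`M_v`; `φ_0(x) = ξ(x_0, x)`,
`φ_{t+1}(x) = φ_t(x) + (1/(2γ))[g_t(x_t) + ⟨∇g_t(x_t), x − x_t⟩ + h(x)]`, `x (t+1)` minimizes
`φ_{t+1}` and `y t` minimizes `x ↦ g_t(x_t) + ⟨∇g_t(x_t), x − x_t⟩ + 2γ·ξ(x_t, x) + h(x)`.
Then for every `x*`,
`∑_{t=0}^{T} [(g_t(y_t) + h(y_t)) − (g_t(x*) + h(x*))] ≤ (ε/2)(T+1) + 2ξ(x_0,x*)γ`. -/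
theorem statement12 {p : ℕ} (T : ℕ) (ε v Mv γ : ℝ) (hε : 0 < ε)
    (hv0 : 0 ≤ v) (hv1 : v ≤ 1) (hMv : 0 < Mv)
    (hγ : γ = (1 / ε) ^ ((1 - v) / (1 + v)) * Mv ^ (2 / (1 + v)))
    (d : EuclideanSpace ℝ (Fin p) → ℝ) (hd : Differentiable ℝ d)
    (hdsc : ∀ x y : EuclideanSpace ℝ (Fin p),
      d x + ⟪gradient d x, y - x⟫_ℝ + 1 / 2 * ‖y - x‖ ^ 2 ≤ d y)
    (xi : EuclideanSpace ℝ (Fin p) → EuclideanSpace ℝ (Fin p) → ℝ)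
    (hxi : ∀ x y : EuclideanSpace ℝ (Fin p), xi x y = d y - d x - ⟪gradient d x, y - x⟫_ℝ)
    (h : EuclideanSpace ℝ (Fin p) → ℝ) (hh : ConvexOn ℝ Set.univ h)
    (g : ℕ → EuclideanSpace ℝ (Fin p) → ℝ)
    (hgconv : ∀ t ≤ T, ConvexOn ℝ Set.univ (g t))
    (hgdiff : ∀ t ≤ T, Differentiable ℝ (g t))
    (hHolder : ∀ t ≤ T, ∀ x y : EuclideanSpace ℝ (Fin p),
      ‖gradient (g t) x - gradient (g t) y‖ ≤ Mv * ‖x - y‖ ^ v)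
    (x : ℕ → EuclideanSpace ℝ (Fin p))
    (hx0 : ∀ z : EuclideanSpace ℝ (Fin p), d (x 0) ≤ d z)
    (φ : ℕ → EuclideanSpace ℝ (Fin p) → ℝ)
    (hφ0 : ∀ z : EuclideanSpace ℝ (Fin p), φ 0 z = xi (x 0) z)
    (hφsucc : ∀ t ≤ T, ∀ z : EuclideanSpace ℝ (Fin p),
      φ (t + 1) z = φ t z
        + 1 / (2 * γ) * (g t (x t) + ⟪gradient (g t) (x t), z - x t⟫_ℝ + h z))
    (hxmin : ∀ t ≤ T, ∀ z : EuclideanSpace ℝ (Fin p), φ (t + 1) (x (t + 1)) ≤ φ (t + 1) z)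
    (y : ℕ → EuclideanSpace ℝ (Fin p))
    (hymin : ∀ t ≤ T, ∀ z : EuclideanSpace ℝ (Fin p),
      g t (x t) + ⟪gradient (g t) (x t), y t - x t⟫_ℝ + 2 * γ * xi (x t) (y t) + h (y t)
        ≤ g t (x t) + ⟪gradient (g t) (x t), z - x t⟫_ℝ + 2 * γ * xi (x t) z + h z) :
    ∀ xstar : EuclideanSpace ℝ (Fin p),
      ∑ t ∈ Finset.range (T + 1), ((g t (y t) + h (y t)) - (g t xstar + h xstar))
        ≤ ε / 2 * (T + 1) + 2 * xi (x 0) xstar * γ :=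
  statement12_general T ε v Mv γ hε hv0 hv1 hMv hγ d hd hdsc xi hxi h hh g hgconv hgdiff hHolder x φ
    hφ0 hφsucc hxmin y hymin
end
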